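/- arXiv:0812.4171 — 4 statements merged into one kernel-verified Lean document; each statement's English description precedes it below -/
import Mathlib

section
/- Let k ≥ 1 and let f : {0,1}^k → ℚ. Then f is of product type if and only if the pointwise square f² : {0,1}^k → ℚ (given by f²(x) = f(x)·f(x), which takes only non-negative values) is of product type. -/
/-- `(-1)^a` for `a ∈ GF(2)`. -/
def signQ (a : ZMod 2) : ℚ := if a = 0 then 1 else -1

/-- The factor corresponding to one equality/disequality term `((i,j), lab)`:
`χ₌(x_i, x_j)` if `lab = true`, `χ≠(x_i, x_j)` if `lab = false`. -/
def edpFactor {k : ℕ} (t : (Fin k × Fin k) × Bool) (x : Fin k → ZMod 2) : ℚ :=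
  if t.2 = true then (if x t.1.1 = x t.1.2 then 1 else 0)
  else (if x t.1.1 = x t.1.2 then 0 else 1)

/-- `g` is a finite product of equality and disequality factors. -/
def IsEDP {k : ℕ} (g : (Fin k → ZMod 2) → ℚ) : Prop :=
  ∃ T : List ((Fin k × Fin k) × Bool),
    ∀ x, g x = (T.map (fun t => edpFactor t x)).prod

/-- `f` is of product type:
`f x = (-1)^(s x) * U₁ x₁ ⋯ U_k x_k * g x` with each `U_i` non-negative and `g`
an equality/disequality product. -/
def IsProductType {k : ℕ} (f : (Fin k → ZMod 2) → ℚ) : Prop :=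
  ∃ (U : Fin k → ZMod 2 → ℚ) (g : (Fin k → ZMod 2) → ℚ)
    (s : (Fin k → ZMod 2) → ZMod 2),
    (∀ i b, 0 ≤ U i b) ∧ IsEDP g ∧
    ∀ x, f x = signQ (s x) * (∏ i, U i (x i)) * g x

section Aux

variable {k : ℕ}

lemma edpFactor_nonneg (t : (Fin k × Fin k) × Bool) (x : Fin k → ZMod 2) :
    0 ≤ edpFactor t x := by
  unfold edpFactor; split <;> split <;> norm_num

lemma isProductType_zero (hk : 1 ≤ k) (f : (Fin k → ZMod 2) → ℚ)
    (hf : ∀ x, f x = 0) : IsProductType f := by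
  refine ⟨fun _ _ => 0, fun _ => 1, fun _ => 0, fun _ _ => le_refl 0,
    ⟨[], fun x => rfl⟩, ?_⟩
  intro x
  rw [hf x, Finset.prod_eq_zero (Finset.mem_univ (⟨0, hk⟩ : Fin k)) rfl]
  ring

/-- Base case: `f x ^ 2` is a pure rank-one nonnegative product. -/
lemma key_nil (hk : 1 ≤ k) (f : (Fin k → ZMod 2) → ℚ) (U : Fin k → ZMod 2 → ℚ)
    (hU : ∀ i b, 0 ≤ U i b)
    (hf : ∀ x, f x * f x = ∏ i, U i (x i)) : IsProductType f := by
  by_cases hz : ∀ x, f x = 0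
  · exact isProductType_zero hk f hz
  push_neg at hz
  obtain ⟨y, hy⟩ := hz
  set d : ℚ := |f y| with hd
  have hd0 : 0 < d := abs_pos.mpr hy
  have hdc : d * d = ∏ i, U i (y i) := by
    rw [abs_mul_abs_self]; exact hf y
  have hUy : ∀ i, U i (y i) ≠ 0 := by
    intro i
    have : (∏ i, U i (y i)) ≠ 0 := by rw [← hdc]; positivity
    exact fun h => this (Finset.prod_eq_zero (Finset.mem_univ i) h)
  set W : Fin k → ZMod 2 → ℚ := fun i b => |f (Function.update y i b)| with hWdef
  have hWsq : ∀ i b, W i b * W i b = U i b * ((d * d) / U i (y i)) := by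
    intro i b
    have h1 : W i b * W i b = ∏ j, U j (Function.update y i b j) := by
      rw [hWdef]; simp only; rw [abs_mul_abs_self]; exact hf _
    rw [h1, ← Finset.mul_prod_erase _ _ (Finset.mem_univ i), Function.update_self]
    congr 1
    have h2 : ∏ j ∈ Finset.univ.erase i, U j (Function.update y i b j)
        = ∏ j ∈ Finset.univ.erase i, U j (y j) := by
      apply Finset.prod_congr rfl
      intro j hj
      rw [Function.update_of_ne (Finset.ne_of_mem_erase hj)]
    rw [h2, eq_div_iff (hUy i), Finset.prod_erase_mul _ _ (Finset.mem_univ i), hdc]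
  have hWnn : ∀ i b, 0 ≤ W i b := fun i b => abs_nonneg _
  have hmain : ∀ x, ∏ i, W i (x i) = |f x| * d ^ (k - 1) := by
    intro x
    have hnn1 : 0 ≤ ∏ i, W i (x i) := Finset.prod_nonneg fun i _ => hWnn i _
    have hnn2 : 0 ≤ |f x| * d ^ (k - 1) := by positivity
    refine (mul_self_inj hnn1 hnn2).mp ?_
    rw [← Finset.prod_mul_distrib]
    have : ∀ i ∈ Finset.univ, W i (x i) * W i (x i)
        = U i (x i) * ((d * d) / U i (y i)) := fun i _ => hWsq i (x i)
    rw [Finset.prod_congr rfl this, Finset.prod_mul_distrib, Finset.prod_div_distrib,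
      Finset.prod_const, Finset.card_univ, Fintype.card_fin, ← hdc]
    have hdd : (d * d) ≠ 0 := by positivity
    have hpow : (d * d) ^ k / (d * d) = (d * d) ^ (k - 1) := by
      rw [div_eq_iff hdd, ← pow_succ, Nat.sub_add_cancel hk]
    rw [hpow, ← hf x]
    have habs : |f x| * |f x| = f x * f x := abs_mul_abs_self _
    have hdp : d ^ (k - 1) * d ^ (k - 1) = (d * d) ^ (k - 1) := by
      rw [mul_pow]
    rw [show |f x| * d ^ (k - 1) * (|f x| * d ^ (k - 1))
        = (|f x| * |f x|) * (d ^ (k - 1) * d ^ (k - 1)) from by ring, habs, hdp]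
  set i0 : Fin k := ⟨0, hk⟩ with hi0
  set V : Fin k → ZMod 2 → ℚ := fun i b => if i = i0 then W i b / d ^ (k - 1) else W i b
    with hVdef
  have hVnn : ∀ i b, 0 ≤ V i b := by
    intro i b; rw [hVdef]; simp only
    split
    · positivity
    · exact hWnn i b
  have hVprod : ∀ x, ∏ i, V i (x i) = |f x| := by
    intro x
    have hsplit : ∀ (G : Fin k → ℚ), ∏ i, G i = G i0 * ∏ i ∈ Finset.univ.erase i0, G i :=
      fun G => (Finset.mul_prod_erase _ _ (Finset.mem_univ i0)).symm
    have hmx := hmain x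
    rw [hsplit (fun i => W i (x i))] at hmx
    rw [hsplit (fun i => V i (x i))]
    have he : ∏ i ∈ Finset.univ.erase i0, V i (x i)
        = ∏ i ∈ Finset.univ.erase i0, W i (x i) := by
      apply Finset.prod_congr rfl
      intro j hj
      rw [hVdef]; simp only [if_neg (Finset.ne_of_mem_erase hj)]
    rw [he]
    have : V i0 (x i0) = W i0 (x i0) / d ^ (k - 1) := by rw [hVdef]; simp
    rw [this]
    have hdpow : (d : ℚ) ^ (k - 1) ≠ 0 := by positivity
    field_simp
    linarith [hmx]
  refine ⟨V, fun _ => 1, fun x => if f x < 0 then 1 else 0, hVnn, ⟨[], fun _ => rfl⟩, ?_⟩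
  intro x
  rw [hVprod x, mul_one]
  by_cases h : f x < 0
  · have hs : signQ ((fun x => if f x < 0 then (1:ZMod 2) else 0) x) = -1 := by
      simp [h, signQ]
    rw [hs, abs_of_neg h]; ring
  · have hs : signQ ((fun x => if f x < 0 then (1:ZMod 2) else 0) x) = 1 := by
      simp [h, signQ]
    rw [hs, abs_of_nonneg (not_lt.mp h), one_mul]

end Aux

section Key

variable {k : ℕ}

lemma zmod2_cases : ∀ c : ZMod 2, c = 0 ∨ c = 1 := by decide

lemma key (hk : 1 ≤ k) : ∀ (n : ℕ) (T : List ((Fin k × Fin k) × Bool)),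
    T.length = n →
    ∀ (f : (Fin k → ZMod 2) → ℚ) (U : Fin k → ZMod 2 → ℚ),
    (∀ i b, 0 ≤ U i b) →
    (∀ x, f x * f x = (∏ i, U i (x i)) * (T.map (fun t => edpFactor t x)).prod) →
    IsProductType f := by
  intro n
  induction n with
  | zero =>
    intro T hTlen f U hU hf
    obtain rfl : T = [] := List.length_eq_zero_iff.mp hTlen
    exact key_nil hk f U hU (by simpa using hf)
  | succ n ih =>
    intro T0 hTlen f U hU hf
    obtain _ | ⟨t, T⟩ := T0
    · simp at hTlen
    have hTn : T.length = n := by simpa using hTlen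
    obtain ⟨⟨i, j⟩, lab⟩ := t
    by_cases hij : i = j
    · subst hij
      cases lab
      · -- disequality with equal endpoints: f ≡ 0
        apply isProductType_zero hk
        intro x
        have h := hf x
        simp only [List.map_cons, List.prod_cons] at h
        rw [show edpFactor ((i,i),false) x = 0 from by simp [edpFactor]] at h
        simp only [zero_mul, mul_zero] at h
        exact mul_self_eq_zero.mp h
      · -- equality with equal endpoints: trivial factor
        apply ih T hTn f U hU
        intro x
        have h := hf x
        simp only [List.map_cons, List.prod_cons] at h
        rw [show edpFactor ((i,i),true) x = 1 from by simp [edpFactor]] at h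
        simpa using h
    · -- i ≠ j : substitute x j := x i + c
      set c : ZMod 2 := if lab then 0 else 1 with hc
      set σ : (Fin k → ZMod 2) → (Fin k → ZMod 2) :=
        fun x => Function.update x j (x i + c) with hσdef
      set ρ : Fin k → Fin k := fun a => if a = j then i else a with hρdef
      set δ : Fin k → ZMod 2 := fun a => if a = j then c else 0 with hδdef
      have hσ : ∀ x a, σ x a = x (ρ a) + δ a := by
        intro x a
        by_cases h : a = j
        · subst h
          simp [hσdef, hρdef, hδdef, Function.update_self]
        · simp [hσdef, hρdef, hδdef, h, Function.update_of_ne h]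
      have hσj : ∀ x, σ x j = x i + c := by
        intro x; simp [hσdef, Function.update_self]
      have hσm : ∀ x m, m ≠ j → σ x m = x m := by
        intro x m h; simp [hσdef, Function.update_of_ne h]
      set tr : ((Fin k × Fin k) × Bool) → ((Fin k × Fin k) × Bool) :=
        fun t' => ((ρ t'.1.1, ρ t'.1.2),
          if δ t'.1.1 + δ t'.1.2 = 0 then t'.2 else !t'.2) with htrdef
      have hfac : ∀ (t' : (Fin k × Fin k) × Bool) x,
          edpFactor t' (σ x) = edpFactor (tr t') x := by
        rintro ⟨⟨a, b⟩, l⟩ x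
        have h1 := hσ x a
        have h2 := hσ x b
        by_cases hd : δ a + δ b = 0
        · have hcond : (σ x a = σ x b) ↔ (x (ρ a) = x (ρ b)) := by
            rw [h1, h2]
            have : ∀ u v d1 d2 : ZMod 2, d1 + d2 = 0 → ((u + d1 = v + d2) ↔ u = v) := by
              decide
            exact this _ _ _ _ hd
          simp only [htrdef, if_pos hd]
          unfold edpFactor
          simp only [hcond]
        · have hcond : (σ x a = σ x b) ↔ ¬ (x (ρ a) = x (ρ b)) := by
            rw [h1, h2]
            have : ∀ u v d1 d2 : ZMod 2, ¬ d1 + d2 = 0 → ((u + d1 = v + d2) ↔ ¬ u = v) := by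
              decide
            exact this _ _ _ _ hd
          simp only [htrdef, if_neg hd]
          unfold edpFactor
          cases l <;> by_cases hxx : x (ρ a) = x (ρ b) <;>
            simp [hcond, hxx]
      set V : Fin k → ZMod 2 → ℚ := fun m b =>
        if m = j then 1 else if m = i then U i b * U j (b + c) else U m b with hVdef
      have hVnn : ∀ m b, 0 ≤ V m b := by
        intro m b
        rw [hVdef]; simp only
        split
        · norm_num
        · split
          · exact mul_nonneg (hU _ _) (hU _ _)
          · exact hU _ _
      have hFsq : ∀ x, f (σ x) * f (σ x)
          = (∏ m, V m (x m)) * ((T.map tr).map (fun t => edpFactor t x)).prod := by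
        intro x
        rw [hf (σ x)]
        have e1 : edpFactor ((i, j), lab) (σ x) = 1 := by
          have hi' : σ x i = x i := hσm x i hij
          have hj' : σ x j = x i + c := hσj x
          cases lab
          · have hc1 : c = 1 := by rw [hc]; rfl
            have : ¬ σ x i = σ x j := by
              rw [hi', hj', hc1]
              have : ∀ u : ZMod 2, ¬ u = u + 1 := by decide
              exact this _
            simp [edpFactor, this]
          · have hc0 : c = 0 := by rw [hc]; rfl
            have : σ x i = σ x j := by rw [hi', hj', hc0, add_zero]
            simp [edpFactor, this]
        have e2 : (T.map (fun t => edpFactor t (σ x))).prod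
            = ((T.map tr).map (fun t => edpFactor t x)).prod := by
          rw [List.map_map]
          congr 1
          exact List.map_congr_left (fun t' _ => hfac t' x)
        have e3 : ∏ m, U m (σ x m) = ∏ m, V m (x m) := by
          have hjmem : j ∈ (Finset.univ : Finset (Fin k)) := Finset.mem_univ j
          have himem : i ∈ Finset.univ.erase j :=
            Finset.mem_erase.mpr ⟨hij, Finset.mem_univ i⟩
          rw [← Finset.mul_prod_erase _ (fun m => U m (σ x m)) hjmem,
              ← Finset.mul_prod_erase _ (fun m => V m (x m)) hjmem,
              ← Finset.mul_prod_erase _ (fun m => U m (σ x m)) himem,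
              ← Finset.mul_prod_erase _ (fun m => V m (x m)) himem]
          have r1 : ∏ m ∈ (Finset.univ.erase j).erase i, U m (σ x m)
              = ∏ m ∈ (Finset.univ.erase j).erase i, V m (x m) := by
            apply Finset.prod_congr rfl
            intro m hm
            have hmi : m ≠ i := Finset.ne_of_mem_erase hm
            have hmj : m ≠ j := Finset.ne_of_mem_erase (Finset.mem_of_mem_erase hm)
            rw [hσm x m hmj, hVdef]
            simp [hmi, hmj]
          rw [r1, hσj x, hσm x i hij]
          have v1 : V j (x j) = 1 := by rw [hVdef]; simp
          have v2 : V i (x i) = U i (x i) * U j (x i + c) := by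
            rw [hVdef]; simp [hij]
          rw [v1, v2]
          ring
        simp only [List.map_cons, List.prod_cons]
        rw [e1, e2, e3]
        ring
      obtain ⟨V', g', s', hV', ⟨T', hT'⟩, hFeq⟩ :=
        ih (T.map tr) (by simpa using hTn) (fun x => f (σ x)) V hVnn hFsq
      have hsplit : ∀ x, f x = f (σ x) * edpFactor ((i, j), lab) x := by
        intro x
        by_cases hcon : x j = x i + c
        · have hσx : σ x = x := by
            rw [hσdef]; simp only
            rw [← hcon, Function.update_eq_self]
          have e1 : edpFactor ((i, j), lab) x = 1 := by
            cases lab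
            · have hc1 : c = 1 := by rw [hc]; rfl
              have hne : ¬ x i = x j := by
                rw [hcon, hc1]
                have : ∀ u : ZMod 2, ¬ u = u + 1 := by decide
                exact this _
              simp [edpFactor, hne]
            · have hc0 : c = 0 := by rw [hc]; rfl
              have heq : x i = x j := by rw [hcon, hc0, add_zero]
              simp [edpFactor, heq]
          rw [hσx, e1, mul_one]
        · have e0 : edpFactor ((i, j), lab) x = 0 := by
            cases lab
            · have hc1 : c = 1 := by rw [hc]; rfl
              rw [hc1] at hcon
              have heq : x i = x j := by
                have : ∀ u v : ZMod 2, ¬ v = u + 1 → u = v := by decide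
                exact this _ _ hcon
              simp [edpFactor, heq]
            · have hc0 : c = 0 := by rw [hc]; rfl
              rw [hc0, add_zero] at hcon
              have hne : ¬ x i = x j := fun h => hcon h.symm
              simp [edpFactor, hne]
          have hf0 : f x = 0 := by
            have h := hf x
            simp only [List.map_cons, List.prod_cons, e0, zero_mul, mul_zero] at h
            exact mul_self_eq_zero.mp h
          rw [hf0, e0, mul_zero]
      refine ⟨V', fun x => edpFactor ((i, j), lab) x * g' x, s', hV',
        ⟨((i, j), lab) :: T', ?_⟩, ?_⟩
      · intro x
        simp only [List.map_cons, List.prod_cons]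
        rw [hT' x]
      · intro x
        show f x = signQ (s' x) * (∏ m, V' m (x m)) * (edpFactor ((i, j), lab) x * g' x)
        rw [hsplit x,
          show f (σ x) = signQ (s' x) * (∏ m, V' m (x m)) * g' x from hFeq x]
        ring

end Key

theorem productType_iff_sq_productType (k : ℕ) (hk : 1 ≤ k)
    (f : (Fin k → ZMod 2) → ℚ) :
    IsProductType f ↔ IsProductType (fun x => f x * f x) := by
  constructor
  · rintro ⟨U, g, s, hU, ⟨T, hT⟩, hfx⟩
    refine ⟨fun i b => U i b * U i b, fun x => g x * g x, fun _ => 0,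
      fun i b => mul_self_nonneg _, ⟨T ++ T, ?_⟩, ?_⟩
    · intro x
      rw [List.map_append, List.prod_append, ← hT x]
    · intro x
      simp only
      rw [hfx x, Finset.prod_mul_distrib,
        show signQ (0 : ZMod 2) = 1 from by norm_num [signQ]]
      have hs : signQ (s x) * signQ (s x) = 1 := by
        unfold signQ; split <;> norm_num
      calc signQ (s x) * (∏ i, U i (x i)) * g x * (signQ (s x) * (∏ i, U i (x i)) * g x)
          = (signQ (s x) * signQ (s x)) *
            ((∏ i, U i (x i)) * (∏ i, U i (x i)) * (g x * g x)) := by ring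
        _ = 1 * ((∏ i, U i (x i)) * ∏ i, U i (x i)) * (g x * g x) := by rw [hs]; ring
  · rintro ⟨U, g, s, hU, ⟨T, hT⟩, hfx⟩
    apply key hk T.length T rfl f U hU
    intro x
    have h := hfx x
    simp only at h
    rw [hT x] at h
    have hgnn : 0 ≤ (T.map (fun t => edpFactor t x)).prod :=
      List.prod_nonneg (by
        intro a ha
        obtain ⟨t, _, rfl⟩ := List.mem_map.mp ha
        exact edpFactor_nonneg t x)
    have hPnn : 0 ≤ (∏ i, U i (x i)) * (T.map (fun t => edpFactor t x)).prod :=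
      mul_nonneg (Finset.prod_nonneg fun i _ => hU i _) hgnn
    by_cases hs : s x = 0
    · rw [show signQ (s x) = 1 from by simp [signQ, hs], one_mul] at h
      exact h
    · rw [show signQ (s x) = -1 from by simp [signQ, hs]] at h
      nlinarith [mul_self_nonneg (f x), hPnn, h]
end

section
/- Let f : {0,1}² → ℚ be the function f(x,y) = (−1)^{xy}, i.e., f(1,1) = −1 and f(0,0) = f(0,1) = f(1,0) = 1. Then f is pure affine and f is of product type, but f is not weakly pure affine and f is not of weak product type. -/
/-- A relation `R ⊆ {0,1}^k` is affine if it is the solution set of a system of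
linear equations over `GF(2)`. -/
def IsAffineRel {k : ℕ} (R : Set (Fin k → ZMod 2)) : Prop :=
  ∃ (m : ℕ) (A : Fin m → Fin k → ZMod 2) (b : Fin m → ZMod 2),
    R = {x | ∀ i, (∑ j, A i j * x j) = b i}

/-- `g : {0,1}^k → ℚ` is the (0/1-valued) indicator of an affine relation. -/
def IsAffineIndicator {k : ℕ} (g : (Fin k → ZMod 2) → ℚ) : Prop :=
  (∀ x, g x = 0 ∨ g x = 1) ∧ IsAffineRel {x | g x = 1}

/-- `f` is pure affine. -/
def IsPureAffine {k : ℕ} (f : (Fin k → ZMod 2) → ℚ) : Prop :=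
  ∃ (w : ℚ) (g : (Fin k → ZMod 2) → ℚ) (s : (Fin k → ZMod 2) → ZMod 2),
    0 < w ∧ IsAffineIndicator g ∧ ∀ x, f x = w * signQ (s x) * g x

/-- `f` is weakly pure affine: `f = w · g` for a rational `w` of arbitrary sign
and `g` the indicator of an affine relation. -/
def IsWeaklyPureAffine {k : ℕ} (f : (Fin k → ZMod 2) → ℚ) : Prop :=
  ∃ (w : ℚ) (g : (Fin k → ZMod 2) → ℚ),
    IsAffineIndicator g ∧ ∀ x, f x = w * g x

/-- `f` is of weak product type: unary functions of arbitrary sign, no sign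
polynomial. -/
def IsWeakProductType {k : ℕ} (f : (Fin k → ZMod 2) → ℚ) : Prop :=
  ∃ (U : Fin k → ZMod 2 → ℚ) (g : (Fin k → ZMod 2) → ℚ),
    IsEDP g ∧ ∀ x, f x = (∏ i, U i (x i)) * g x

/-- `f(x,y) = (-1)^{xy}` is pure affine and of product type, but neither weakly
pure affine nor of weak product type. -/
theorem xy_example :
    IsPureAffine (fun x : Fin 2 → ZMod 2 => signQ (x 0 * x 1)) ∧
    IsProductType (fun x : Fin 2 → ZMod 2 => signQ (x 0 * x 1)) ∧
    ¬ IsWeaklyPureAffine (fun x : Fin 2 → ZMod 2 => signQ (x 0 * x 1)) ∧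
    ¬ IsWeakProductType (fun x : Fin 2 → ZMod 2 => signQ (x 0 * x 1)) := by

  have hsign : ∀ a : ZMod 2, signQ a = 1 ∨ signQ a = -1 := by
    intro a; unfold signQ; split_ifs <;> simp
  have h00 : ((![0,0] : Fin 2 → ZMod 2) 0) * (![0,0] 1) = 0 := by decide
  have h01 : ((![0,1] : Fin 2 → ZMod 2) 0) * (![0,1] 1) = 0 := by decide
  have h10 : ((![1,0] : Fin 2 → ZMod 2) 0) * (![1,0] 1) = 0 := by decide
  have h11 : ((![1,1] : Fin 2 → ZMod 2) 0) * (![1,1] 1) = 1 := by decide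
  refine ⟨?_, ?_, ?_, ?_⟩
  · refine ⟨1, fun _ => 1, fun x => x 0 * x 1, one_pos,
      ⟨fun x => Or.inr rfl, 0, Fin.elim0, Fin.elim0, by ext x; simp⟩,
      fun x => by ring⟩
  · exact ⟨fun _ _ => 1, fun _ => 1, fun x => x 0 * x 1,
      fun _ _ => zero_le_one, ⟨[], fun x => by simp⟩, fun x => by simp⟩
  · rintro ⟨w, g, ⟨hg01, -⟩, hf⟩
    have e1 := hf ![1,1]
    have e0 := hf ![0,0]
    simp only [h11, h00, signQ] at e1 e0
    norm_num at e1 e0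
    rcases hg01 ![1,1] with h | h <;> rcases hg01 ![0,0] with h' | h' <;>
      rw [h] at e1 <;> rw [h'] at e0 <;> simp at e1 e0 <;> linarith
  · rintro ⟨U, g, ⟨T, hT⟩, hf⟩
    have hf' : ∀ x : Fin 2 → ZMod 2, signQ (x 0 * x 1) = (∏ i, U i (x i)) * g x := hf
    have hg01 : ∀ x, g x = 0 ∨ g x = 1 := by
      intro x; rw [hT x]; clear hT hf hf'
      induction T with
      | nil => simp
      | cons t T ih =>
        simp only [List.map_cons, List.prod_cons]
        have ht : edpFactor t x = 0 ∨ edpFactor t x = 1 := by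
          unfold edpFactor; split_ifs <;> simp
        rcases ih with h | h <;> rcases ht with h' | h' <;> rw [h, h'] <;> simp
    have hne : ∀ x : Fin 2 → ZMod 2, signQ (x 0 * x 1) ≠ 0 := by
      intro x; rcases hsign (x 0 * x 1) with h | h <;> rw [h] <;> norm_num
    have hg1 : ∀ x, g x = 1 := by
      intro x
      rcases hg01 x with h | h
      · exact absurd (by rw [hf' x, h, mul_zero]) (hne x)
      · exact h
    have key : ∀ x : Fin 2 → ZMod 2, signQ (x 0 * x 1) = U 0 (x 0) * U 1 (x 1) := by
      intro x
      rw [hf' x, hg1, mul_one, Fin.prod_univ_two]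
    have k00 := key ![0,0]
    have k01 := key ![0,1]
    have k10 := key ![1,0]
    have k11 := key ![1,1]
    simp only [h00, h01, h10, h11] at k00 k01 k10 k11
    simp only [show ((![0,0] : Fin 2 → ZMod 2) 0) = 0 by decide,
      show ((![0,0] : Fin 2 → ZMod 2) 1) = 0 by decide,
      show ((![0,1] : Fin 2 → ZMod 2) 0) = 0 by decide,
      show ((![0,1] : Fin 2 → ZMod 2) 1) = 1 by decide,
      show ((![1,0] : Fin 2 → ZMod 2) 0) = 1 by decide,
      show ((![1,0] : Fin 2 → ZMod 2) 1) = 0 by decide,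
      show ((![1,1] : Fin 2 → ZMod 2) 0) = 1 by decide,
      show ((![1,1] : Fin 2 → ZMod 2) 1) = 1 by decide,
      signQ] at k00 k01 k10 k11
    norm_num at k00 k01 k10 k11
    nlinarith [k00, k01, k10, k11]
end

section
/- Let k ≥ 3 and let p be a multilinear polynomial over GF(2) in the variables x₁,…,x_k (each variable occurring with individual degree at most 1) whose total degree is at least 3. Then there exist three distinct indices i, j, l ∈ {1,…,k} and constants c_m ∈ GF(2) for every m ∉ {i,j,l} such that the polynomial obtained from p by substituting x_m := c_m for all m ∉ {i,j,l} is a multilinear polynomial in the variables x_i, x_j, x_l of total degree exactly 3; in particular, it contains the monomial x_i·x_j·x_l with coefficient 1. -/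
/-!
Let `T` be a monomial of `p` of least degree among those of degree at least 3, and let
`x_i, x_j, x_l` be three of its variables. Setting the other variables of `T` to 1 and all
variables outside `T` to 0 kills every monomial not supported inside `T`, and sends a monomial
supported inside `T` to the product of its variables among `x_i, x_j, x_l`. A multilinear monomial
supported inside `T` and divisible by `x_i x_j x_l` has degree at least 3, so by minimality it is
`T` itself. Hence the coefficient of `x_i x_j x_l` after the substitution is that of `T`, namely 1.
-/

open MvPolynomial

namespace Finsupp

variable {σ : Type*} {m n : σ →₀ ℕ}

theorem degree_eq_card_support_of_le_one (hm : ∀ a, m a ≤ 1) : m.degree = m.support.card := by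
  rw [degree_apply, Finset.card_eq_sum_ones]
  refine Finset.sum_congr rfl fun a ha => ?_
  have := hm a
  have := mem_support_iff.mp ha
  omega

theorem eq_of_support_subset_of_degree_le (hm : ∀ a, m a ≤ 1) (hn : ∀ a, n a ≤ 1)
    (hsub : m.support ⊆ n.support) (hdeg : n.degree ≤ m.degree) : m = n := by
  rw [degree_eq_card_support_of_le_one hm, degree_eq_card_support_of_le_one hn] at hdeg
  have hsupp := Finset.eq_of_subset_of_card_le hsub hdeg
  ext a
  have := hm a
  have := hn a
  by_cases ha : a ∈ m.support
  · have := mem_support_iff.mp ha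
    have := mem_support_iff.mp (hsupp ▸ ha)
    omega
  · rw [notMem_support_iff.mp ha, notMem_support_iff.mp (hsupp ▸ ha)]

end Finsupp

namespace MvPolynomial

variable {σ R : Type*} [CommSemiring R]

theorem totalDegree_le_card_vars {p : MvPolynomial σ R} (hp : p ∈ restrictDegree σ R 1) :
    p.totalDegree ≤ p.vars.card := by
  rw [mem_restrictDegree] at hp
  refine Finset.sup_le fun m hm => ?_
  change m.degree ≤ _
  rw [Finsupp.degree_eq_card_support_of_le_one (hp m hm)]
  exact Finset.card_le_card (support_subset_vars_of_mem_support hm)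

theorem exists_mem_support_unique_between {p : MvPolynomial σ R}
    (hp : p ∈ restrictDegree σ R 1) (hp0 : p ≠ 0) {n : ℕ} (hn : n ≤ p.totalDegree) :
    ∃ T ∈ p.support, ∃ t ⊆ T.support, t.card = n ∧
      ∀ m ∈ p.support, t ⊆ m.support → m.support ⊆ T.support → m = T := by
  rw [mem_restrictDegree] at hp
  have hne : {m ∈ p.support | n ≤ m.degree}.Nonempty := by
    obtain ⟨m, hm, hmax⟩ :=
      Finset.exists_mem_eq_sup p.support (support_nonempty.mpr hp0) Finsupp.degree
    exact ⟨m, Finset.mem_filter.mpr ⟨hm, hmax ▸ hn⟩⟩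
  obtain ⟨T, hT, hTmin⟩ := Finset.exists_min_image _ Finsupp.degree hne
  obtain ⟨hTp, hTn⟩ := Finset.mem_filter.mp hT
  rw [Finsupp.degree_eq_card_support_of_le_one (hp T hTp)] at hTn
  obtain ⟨t, htT, htcard⟩ := Finset.exists_subset_card_eq hTn
  refine ⟨T, hTp, t, htT, htcard, fun m hm htm hmT => ?_⟩
  have hmn : n ≤ m.degree := by
    rw [Finsupp.degree_eq_card_support_of_le_one (hp m hm), ← htcard]
    exact Finset.card_le_card htm
  exact Finsupp.eq_of_support_subset_of_degree_le (hp m hm) (hp T hTp) hmT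
    (hTmin m (Finset.mem_filter.mpr ⟨hm, hmn⟩))

section PartialSubst

variable (P : σ → Prop) [DecidablePred P]

noncomputable def partialSubst (c : σ → R) (a : σ) : MvPolynomial σ R :=
  if P a then X a else C (c a)

theorem bind₁_partialSubst_monomial (c : σ → R) (m : σ →₀ ℕ) (r : R) :
    bind₁ (partialSubst P c) (monomial m r) =
      monomial (m.filter P) (r * ∏ a ∈ m.support with ¬P a, c a ^ m a) := by
  have hkept : ∏ a ∈ m.support with P a, partialSubst P c a ^ m a = monomial (m.filter P) 1 := by
    rw [monomial_eq, C_1, one_mul, Finsupp.prod, Finsupp.support_filter]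
    refine Finset.prod_congr rfl fun a ha => ?_
    have hPa := (Finset.mem_filter.mp ha).2
    rw [partialSubst, if_pos hPa, Finsupp.filter_apply_pos _ _ hPa]
  have hfixed : ∏ a ∈ m.support with ¬P a, partialSubst P c a ^ m a =
      C (∏ a ∈ m.support with ¬P a, c a ^ m a) := by
    rw [map_prod]
    refine Finset.prod_congr rfl fun a ha => ?_
    rw [partialSubst, if_neg (Finset.mem_filter.mp ha).2, map_pow]
  rw [bind₁_monomial, ← Finset.prod_filter_mul_prod_filter_not m.support P, hkept, hfixed,
    mul_comm (monomial _ _), ← mul_assoc, ← C_mul, C_mul_monomial, mul_one]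

theorem bind₁_partialSubst_eq_sum (c : σ → R) (p : MvPolynomial σ R) :
    bind₁ (partialSubst P c) p = ∑ m ∈ p.support,
      monomial (m.filter P) (coeff m p * ∏ a ∈ m.support with ¬P a, c a ^ m a) := by
  conv_lhs => rw [p.as_sum]
  simp only [map_sum, bind₁_partialSubst_monomial]

theorem exists_eq_filter_of_mem_support_bind₁_partialSubst (c : σ → R) (p : MvPolynomial σ R)
    {μ : σ →₀ ℕ} (hμ : μ ∈ (bind₁ (partialSubst P c) p).support) :
    ∃ m ∈ p.support, μ = m.filter P := by
  classical
  rw [bind₁_partialSubst_eq_sum] at hμ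
  obtain ⟨m, hm, hμm⟩ := Finset.mem_biUnion.mp (support_sum hμ)
  exact ⟨m, hm, Finset.mem_singleton.mp (support_monomial_subset hμm)⟩

theorem bind₁_partialSubst_mem_restrictDegree (c : σ → R) {p : MvPolynomial σ R} {n : ℕ}
    (hp : p ∈ restrictDegree σ R n) : bind₁ (partialSubst P c) p ∈ restrictDegree σ R n := by
  rw [mem_restrictDegree] at hp ⊢
  intro μ hμ a
  obtain ⟨m, hm, rfl⟩ := exists_eq_filter_of_mem_support_bind₁_partialSubst P c p hμ
  rw [Finsupp.filter_apply]
  split_ifs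
  · exact hp m hm a
  · exact Nat.zero_le n

theorem mem_vars_bind₁_partialSubst (c : σ → R) (p : MvPolynomial σ R) {a : σ}
    (ha : a ∈ (bind₁ (partialSubst P c) p).vars) : P a := by
  obtain ⟨μ, hμ, haμ⟩ := (mem_vars_iff_mem_support a).mp ha
  obtain ⟨m, -, rfl⟩ := exists_eq_filter_of_mem_support_bind₁_partialSubst P c p hμ
  exact (Finset.mem_filter.mp haμ).2

open Classical in
theorem coeff_bind₁_partialSubst_indicator (S : Set σ) (p : MvPolynomial σ R) (μ : σ →₀ ℕ) :
    coeff μ (bind₁ (partialSubst P (S.indicator 1)) p) =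
      ∑ m ∈ p.support, if m.filter P = μ ∧ ∀ a ∈ m.support, ¬P a → a ∈ S then coeff m p else 0 := by
  rw [bind₁_partialSubst_eq_sum, coeff_sum]
  refine Finset.sum_congr rfl fun m _ => ?_
  have hprod : ∏ a ∈ m.support with ¬P a, S.indicator (1 : σ → R) a ^ m a =
      if ∀ a ∈ m.support, ¬P a → a ∈ S then 1 else 0 := by
    split_ifs with hS
    · refine Finset.prod_eq_one fun a ha => ?_
      obtain ⟨ham, hPa⟩ := Finset.mem_filter.mp ha
      rw [Set.indicator_of_mem (hS a ham hPa), Pi.one_apply, one_pow]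
    · push Not at hS
      obtain ⟨a, ham, hPa, haS⟩ := hS
      refine Finset.prod_eq_zero (Finset.mem_filter.mpr ⟨ham, hPa⟩) ?_
      rw [Set.indicator_of_notMem haS, zero_pow (Finsupp.mem_support_iff.mp ham)]
  rw [coeff_monomial, hprod]
  by_cases hμ : m.filter P = μ <;> simp [hμ]

theorem coeff_filter_bind₁_partialSubst_indicator_support (p : MvPolynomial σ R) (T : σ →₀ ℕ)
    (hT : ∀ m ∈ p.support, (∀ a ∈ T.support, P a → a ∈ m.support) → m.support ⊆ T.support →
      m = T) :
    coeff (T.filter P) (bind₁ (partialSubst P (Set.indicator T.support 1)) p) = coeff T p := by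
  rw [coeff_bind₁_partialSubst_indicator, Finset.sum_eq_single T]
  · rw [if_pos ⟨rfl, fun a ha _ => ha⟩]
  · rintro m hm hmT
    rw [if_neg]
    rintro ⟨hfilter, hfixed⟩
    have hsupp := Finset.ext_iff.mp (congrArg Finsupp.support hfilter)
    simp only [Finsupp.support_filter, Finset.mem_filter] at hsupp
    refine hmT (hT m hm (fun a ha hPa => ((hsupp a).mpr ⟨ha, hPa⟩).1) fun a ha => ?_)
    by_cases hPa : P a
    · exact ((hsupp a).mp ⟨ha, hPa⟩).1
    · exact hfixed a ha hPa
  · intro hT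
    rw [notMem_support_iff.mp hT, ite_self]

end PartialSubst

end MvPolynomial

theorem multilinear_degree_three_restriction_general
    (k : ℕ) (p : MvPolynomial (Fin k) (ZMod 2))
    (hml : ∀ m ∈ p.support, ∀ i, m i ≤ 1)
    (hdeg : 3 ≤ p.totalDegree) :
    ∃ i j l : Fin k, i ≠ j ∧ i ≠ l ∧ j ≠ l ∧
      ∃ c : Fin k → ZMod 2,
        ∃ q : MvPolynomial (Fin k) (ZMod 2),
          q = MvPolynomial.bind₁
                (fun m => if m = i ∨ m = j ∨ m = l then (MvPolynomial.X m)
                          else MvPolynomial.C (c m)) p ∧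
          (∀ m ∈ q.support, ∀ a, m a ≤ 1) ∧
          q.vars ⊆ {i, j, l} ∧
          q.totalDegree = 3 ∧
          q.coeff (Finsupp.single i 1 + Finsupp.single j 1
            + Finsupp.single l 1) = 1 := by
  have hp : p ∈ restrictDegree (Fin k) (ZMod 2) 1 := (mem_restrictDegree _ p 1).mpr hml
  have hp0 : p ≠ 0 := by rintro rfl; simp at hdeg
  obtain ⟨T, hTp, t, htT, ht3, hTunique⟩ := exists_mem_support_unique_between hp hp0 hdeg
  obtain ⟨i, j, l, hij, hil, hjl, rfl⟩ := Finset.card_eq_three.mp ht3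
  set P : Fin k → Prop := fun m => m = i ∨ m = j ∨ m = l
  set q := bind₁ (partialSubst P (Set.indicator T.support 1)) p
  have hTP : T.filter P = Finsupp.single i 1 + Finsupp.single j 1 + Finsupp.single l 1 := by
    ext a
    have := hml T hTp a
    simp only [Finset.insert_subset_iff, Finset.singleton_subset_iff, Finsupp.mem_support_iff] at htT
    simp only [Finsupp.filter_apply, Finsupp.add_apply, Finsupp.single_apply, P]
    split_ifs <;> grind
  have hcoeff : q.coeff (Finsupp.single i 1 + Finsupp.single j 1 + Finsupp.single l 1) = 1 := by
    rw [← hTP, coeff_filter_bind₁_partialSubst_indicator_support]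
    · exact (by decide : ∀ x : ZMod 2, x ≠ 0 → x = 1) _ (mem_support_iff.mp hTp)
    · exact fun m hm htm => hTunique m hm fun a ha => htm a (htT ha) (by simpa [P] using ha)
  have hq : q ∈ restrictDegree (Fin k) (ZMod 2) 1 := bind₁_partialSubst_mem_restrictDegree P _ hp
  have hvars : q.vars ⊆ {i, j, l} := fun a ha => by
    simpa [P] using mem_vars_bind₁_partialSubst P _ p ha
  refine ⟨i, j, l, hij, hil, hjl, _, q, rfl, (mem_restrictDegree _ q 1).mp hq, hvars,
    le_antisymm ?_ ?_, hcoeff⟩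
  · calc q.totalDegree ≤ q.vars.card := totalDegree_le_card_vars hq
      _ ≤ 3 := (Finset.card_le_card hvars).trans Finset.card_le_three
  · have h3 := le_totalDegree (mem_support_iff.mpr (hcoeff ▸ one_ne_zero))
    change Finsupp.degree _ ≤ _ at h3
    simpa only [map_add, Finsupp.degree_single] using h3

/-- Pinning a high-degree multilinear polynomial over `GF(2)` down to three
variables while keeping a cubic term. -/
theorem multilinear_degree_three_restriction
    (k : ℕ) (hk : 3 ≤ k) (p : MvPolynomial (Fin k) (ZMod 2))
    (hml : ∀ m ∈ p.support, ∀ i, m i ≤ 1)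
    (hdeg : 3 ≤ p.totalDegree) :
    ∃ i j l : Fin k, i ≠ j ∧ i ≠ l ∧ j ≠ l ∧
      ∃ c : Fin k → ZMod 2,
        ∃ q : MvPolynomial (Fin k) (ZMod 2),
          q = MvPolynomial.bind₁
                (fun m => if m = i ∨ m = j ∨ m = l then (MvPolynomial.X m)
                          else MvPolynomial.C (c m)) p ∧
          (∀ m ∈ q.support, ∀ a, m a ≤ 1) ∧
          q.vars ⊆ {i, j, l} ∧
          q.totalDegree = 3 ∧
          q.coeff (Finsupp.single i 1 + Finsupp.single j 1
            + Finsupp.single l 1) = 1 :=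
  multilinear_degree_three_restriction_general k p hml hdeg
end

section
/- Let A be a k×k matrix with rational entries and let G be a finite directed multigraph with vertex set V, edge set E, and source and target maps s, t : E → V. Then ∑_{σ : V → {1,…,k}} ∏_{e ∈ E} (A·Aᵀ)_{σ(s(e)), σ(t(e))} = ∑_{τ : V ⊔ E → {1,…,k}} ∏_{e ∈ E} A_{τ(s(e)), τ(e)} · A_{τ(t(e)), τ(e)}, where in the right-hand sum τ ranges over all functions on the disjoint union V ⊔ E, s(e) and t(e) are regarded as elements of the V-part, and e as an element of the E-part. (Equivalently: Z_{AAᵀ}(G) = Z_A(G₂), where G₂ is obtained from G by introducing a new vertex v_e for each edge e = (x,y) and replacing e by the two edges (x, v_e) and (y, v_e).) -/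
open Matrix

/-- `Z_{AAᵀ}(G) = Z_A(G₂)`: the partition function of `A·Aᵀ` on a directed
multigraph `G` equals the partition function of `A` on the graph obtained by
replacing each edge `e = (x, y)` by the two edges `(x, v_e)` and `(y, v_e)`. -/
theorem eval_AAt_eq_eval_subdivided
    (k : ℕ) (A : Matrix (Fin k) (Fin k) ℚ)
    (V E : Type) [Fintype V] [DecidableEq V] [Fintype E] [DecidableEq E]
    (src tgt : E → V) :
    (∑ σ : V → Fin k, ∏ e : E, (A * Aᵀ) (σ (src e)) (σ (tgt e)))
      = ∑ τ : (V ⊕ E) → Fin k, ∏ e : E,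
          A (τ (Sum.inl (src e))) (τ (Sum.inr e))
            * A (τ (Sum.inl (tgt e))) (τ (Sum.inr e)) := by
  rw [← Equiv.sum_comp (Equiv.sumArrowEquivProdArrow V E (Fin k)).symm
      (fun τ => ∏ e : E, A (τ (Sum.inl (src e))) (τ (Sum.inr e))
          * A (τ (Sum.inl (tgt e))) (τ (Sum.inr e)))]
  rw [Fintype.sum_prod_type]
  refine Finset.sum_congr rfl fun σ _ => ?_
  simp only [Matrix.mul_apply, Matrix.transpose_apply, Equiv.sumArrowEquivProdArrow,
    Equiv.coe_fn_symm_mk, Sum.elim_inl, Sum.elim_inr]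
  rw [Finset.prod_univ_sum]
  simp [Fintype.piFinset_univ]
end
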